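/- arXiv:1504.06999 — 3 statements merged into one kernel-verified Lean document; each statement's English description precedes it below -/
import Mathlib

section
/- Let (Y_n) be a sequence of real random variables adapted to a filtration (F_n). If ∑_{j≥1} j^{-2} E[Y_j²] < ∞ and E[Y_j | F_{j-1}] converges almost surely to a random variable Y, then the Cesàro means (1/n) ∑_{j=1}^n Y_j converge almost surely to Y. -/
open MeasureTheory ProbabilityTheory Filter
open scoped Topology

open Finset

/-!
Write `Y (j + 1) = d j + μ[Y (j + 1)|ℱ j]`. The conditional expectations converge a.s. to `Ylim`,
hence so do their Cesàro means. The differences `d j` satisfy `μ[d j|ℱ j] = 0` and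
`E[d j ^ 2] ≤ E[Y (j + 1) ^ 2]`, so `M n = ∑_{j<n} d j / (j + 1)` is a martingale whose increments
are orthogonal in L²; hence `E[M n ^ 2] ≤ ∑ (j + 1)⁻² E[Y (j + 1) ^ 2] < ∞`. By the martingale
convergence theorem `M n` converges a.s., and Kronecker's lemma turns this into
`(1/n) ∑_{j<n} d j → 0` a.s.
-/

lemma sum_range_eq_mul_sum_inv_succ_mul_sub (u : ℕ → ℝ) (n : ℕ) :
    ∑ j ∈ range n, u j = n * ∑ j ∈ range n, ((j : ℝ) + 1)⁻¹ * u j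
      - ∑ k ∈ range n, ∑ j ∈ range k, ((j : ℝ) + 1)⁻¹ * u j := by
  induction n with
  | zero => simp
  | succ n ih =>
    rw [sum_range_succ, ih, sum_range_succ (fun k => ∑ j ∈ range k, ((j : ℝ) + 1)⁻¹ * u j),
      sum_range_succ (fun j => ((j : ℝ) + 1)⁻¹ * u j)]
    have : (n : ℝ) + 1 ≠ 0 := by positivity
    push_cast
    field_simp
    ring

-- Kronecker's lemma
lemma tendsto_cesaro_zero_of_tendsto_sum_inv_succ_mul {u : ℕ → ℝ} {l : ℝ}
    (h : Tendsto (fun n => ∑ j ∈ range n, ((j : ℝ) + 1)⁻¹ * u j) atTop (𝓝 l)) :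
    Tendsto (fun n : ℕ => (n : ℝ)⁻¹ * ∑ j ∈ range n, u j) atTop (𝓝 0) := by
  have hlim := h.sub h.cesaro
  rw [sub_self] at hlim
  refine hlim.congr' ?_
  filter_upwards [eventually_ne_atTop 0] with n hn
  rw [sum_range_eq_mul_sum_inv_succ_mul_sub u n, mul_sub, ← mul_assoc,
    inv_mul_cancel₀ (Nat.cast_ne_zero.mpr hn), one_mul]

section

variable {Ω : Type*} {m m0 : MeasurableSpace Ω} {μ : Measure Ω}

lemma integral_mul_eq_zero_of_condExp_ae_eq_zero (hm : m ≤ m0) [SigmaFinite (μ.trim hm)]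
    {φ g : Ω → ℝ} (hφ : StronglyMeasurable[m] φ) (hφg : Integrable (φ * g) μ)
    (hg : Integrable g μ) (hg0 : μ[g|m] =ᵐ[μ] 0) :
    ∫ ω, φ ω * g ω ∂μ = 0 :=
  calc ∫ ω, φ ω * g ω ∂μ = ∫ ω, (μ[φ * g|m]) ω ∂μ := (integral_condExp hm).symm
    _ = 0 := integral_eq_zero_of_ae <| by
      filter_upwards [condExp_mul_of_stronglyMeasurable_left hφ hφg hg, hg0] with ω h h0
      simp [h, h0]

lemma integral_sq_sub_condExp_le (hm : m ≤ m0) [IsFiniteMeasure μ] {X : Ω → ℝ}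
    (hX : MemLp X 2 μ) :
    ∫ ω, (X ω - (μ[X|m]) ω) ^ 2 ∂μ ≤ ∫ ω, X ω ^ 2 ∂μ :=
  calc ∫ ω, (X ω - (μ[X|m]) ω) ^ 2 ∂μ = ∫ ω, (Var[X; μ | m]) ω ∂μ := (integral_condExp hm).symm
    _ ≤ ∫ ω, (μ[X ^ 2|m]) ω ∂μ :=
      integral_mono_ae integrable_condVar integrable_condExp (condVar_ae_le_condExp_sq hm hX)
    _ = ∫ ω, X ω ^ 2 ∂μ := integral_condExp hm

lemma integral_add_sq_of_condExp_ae_eq_zero (hm : m ≤ m0) [IsFiniteMeasure μ]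
    {φ g : Ω → ℝ} (hφ : StronglyMeasurable[m] φ) (hφ2 : MemLp φ 2 μ) (hg2 : MemLp g 2 μ)
    (hg0 : μ[g|m] =ᵐ[μ] 0) :
    ∫ ω, (φ ω + g ω) ^ 2 ∂μ = ∫ ω, φ ω ^ 2 ∂μ + ∫ ω, g ω ^ 2 ∂μ := by
  have hφg : Integrable (φ * g) μ := hφ2.integrable_mul hg2
  have hcross : ∫ ω, φ ω * g ω ∂μ = 0 :=
    integral_mul_eq_zero_of_condExp_ae_eq_zero hm hφ hφg (hg2.integrable one_le_two) hg0
  have hφ2' : Integrable (fun ω => φ ω ^ 2) μ := hφ2.integrable_sq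
  have hφg' : Integrable (fun ω => 2 * (φ ω * g ω)) μ := hφg.const_mul 2
  have hφ2_add_cross : Integrable (fun ω => φ ω ^ 2 + 2 * (φ ω * g ω)) μ := hφ2'.add hφg'
  calc ∫ ω, (φ ω + g ω) ^ 2 ∂μ = ∫ ω, (φ ω ^ 2 + 2 * (φ ω * g ω)) + g ω ^ 2 ∂μ := by
        congr with ω; ring
    _ = ∫ ω, φ ω ^ 2 ∂μ + 2 * ∫ ω, φ ω * g ω ∂μ + ∫ ω, g ω ^ 2 ∂μ := by
        rw [integral_add hφ2_add_cross hg2.integrable_sq, integral_add hφ2' hφg',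
          integral_const_mul]
    _ = ∫ ω, φ ω ^ 2 ∂μ + ∫ ω, g ω ^ 2 ∂μ := by rw [hcross]; ring

lemma condExp_sub_condExp_ae_eq_zero (hm : m ≤ m0) [SigmaFinite (μ.trim hm)] {f : Ω → ℝ}
    (hf : Integrable f μ) : μ[f - μ[f|m]|m] =ᵐ[μ] 0 := by
  filter_upwards [condExp_sub hf integrable_condExp m] with ω h
  rw [h, condExp_of_stronglyMeasurable hm stronglyMeasurable_condExp integrable_condExp,
    Pi.sub_apply, sub_self, Pi.zero_apply]

variable [IsFiniteMeasure μ] {ℱ : Filtration ℕ m0} {f : ℕ → Ω → ℝ}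

lemma MeasureTheory.Martingale.condExp_sub_ae_eq_zero (hf : Martingale f ℱ μ) {i j : ℕ}
    (hij : i ≤ j) : μ[f j - f i|ℱ i] =ᵐ[μ] 0 := by
  filter_upwards [condExp_sub (hf.integrable j) (hf.integrable i) (ℱ i),
    hf.condExp_ae_eq hij] with ω h h'
  rw [h, Pi.sub_apply, h', condExp_of_stronglyMeasurable (ℱ.le i) (hf.stronglyAdapted i)
    (hf.integrable i), sub_self, Pi.zero_apply]

lemma MeasureTheory.Martingale.integral_sq_eq_add_sum_integral_sq_sub (hf : Martingale f ℱ μ)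
    (hf2 : ∀ n, MemLp (f n) 2 μ) (n : ℕ) :
    ∫ ω, f n ω ^ 2 ∂μ
      = ∫ ω, f 0 ω ^ 2 ∂μ + ∑ i ∈ range n, ∫ ω, (f (i + 1) ω - f i ω) ^ 2 ∂μ := by
  induction n with
  | zero => simp
  | succ n ih =>
    calc ∫ ω, f (n + 1) ω ^ 2 ∂μ = ∫ ω, (f n ω + (f (n + 1) - f n) ω) ^ 2 ∂μ := by
          simp only [Pi.sub_apply, add_sub_cancel]
      _ = ∫ ω, f n ω ^ 2 ∂μ + ∫ ω, ((f (n + 1) - f n) ω) ^ 2 ∂μ :=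
          integral_add_sq_of_condExp_ae_eq_zero (ℱ.le n) (hf.stronglyAdapted n) (hf2 n)
            ((hf2 (n + 1)).sub (hf2 n)) (hf.condExp_sub_ae_eq_zero n.le_succ)
      _ = _ := by rw [ih, sum_range_succ, add_assoc]; rfl

lemma MeasureTheory.Martingale.exists_ae_tendsto_of_integral_sq_le (hf : Martingale f ℱ μ)
    (hf2 : ∀ n, MemLp (f n) 2 μ) {B : ℝ} (hB : ∀ n, ∫ ω, f n ω ^ 2 ∂μ ≤ B) :
    ∀ᵐ ω ∂μ, ∃ c, Tendsto (fun n => f n ω) atTop (𝓝 c) := by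
  refine hf.submartingale.exists_ae_tendsto_of_bdd (R := (μ.real Set.univ + B).toNNReal)
    fun n => ?_
  have habs : ∫ ω, ‖f n ω‖ ∂μ ≤ μ.real Set.univ + B :=
    calc ∫ ω, ‖f n ω‖ ∂μ ≤ ∫ ω, (1 + f n ω ^ 2) ∂μ :=
          integral_mono (hf.integrable n).norm ((integrable_const 1).add (hf2 n).integrable_sq)
            fun ω => by
              rw [Real.norm_eq_abs]
              nlinarith [sq_nonneg (|f n ω| - 1), sq_abs (f n ω)]
      _ = μ.real Set.univ + ∫ ω, f n ω ^ 2 ∂μ := by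
          rw [integral_add (integrable_const 1) (hf2 n).integrable_sq]
          simp
      _ ≤ μ.real Set.univ + B := by linarith [hB n]
  rw [eLpNorm_one_eq_lintegral_enorm, ← ofReal_integral_norm_eq_lintegral_enorm (hf.integrable n)]
  exact ENNReal.ofReal_le_ofReal habs

theorem ae_tendsto_cesaro_zero_of_condExp_ae_eq_zero {d : ℕ → Ω → ℝ}
    (hd : ∀ j, StronglyMeasurable[ℱ (j + 1)] (d j)) (hd2 : ∀ j, MemLp (d j) 2 μ)
    (hd0 : ∀ j, μ[d j|ℱ j] =ᵐ[μ] 0)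
    (hsum : Summable fun j : ℕ => ((j : ℝ) + 1)⁻¹ ^ 2 * ∫ ω, d j ω ^ 2 ∂μ) :
    ∀ᵐ ω ∂μ, Tendsto (fun n : ℕ => (n : ℝ)⁻¹ * ∑ j ∈ range n, d j ω) atTop (𝓝 0) := by
  set M : ℕ → Ω → ℝ := fun n => ∑ j ∈ range n, ((j : ℝ) + 1)⁻¹ • d j
  have hM2 : ∀ n, MemLp (M n) 2 μ := fun n =>
    memLp_finsetSum' _ fun j _ => (hd2 j).const_smul _
  have hMsucc : ∀ n, M (n + 1) - M n = ((n : ℝ) + 1)⁻¹ • d n := fun n => by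
    simp only [M, sum_range_succ, add_sub_cancel_left]
  have hM : Martingale M ℱ μ := by
    refine martingale_of_condExp_sub_eq_zero_nat (fun n => ?_)
      (fun n => (hM2 n).integrable one_le_two) fun n => ?_
    · exact Finset.stronglyMeasurable_sum _ fun j hj =>
        ((hd j).mono (ℱ.mono (mem_range.mp hj))).const_smul _
    · filter_upwards [condExp_smul ((n : ℝ) + 1)⁻¹ (d n) (ℱ n), hd0 n] with ω h h0
      rw [hMsucc, h, Pi.smul_apply, h0, Pi.zero_apply, smul_zero]
  have hB : ∀ n, ∫ ω, M n ω ^ 2 ∂μ ≤ ∑' j : ℕ, ((j : ℝ) + 1)⁻¹ ^ 2 * ∫ ω, d j ω ^ 2 ∂μ := by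
    intro n
    have hinc : ∀ i, ∫ ω, (M (i + 1) ω - M i ω) ^ 2 ∂μ
        = ((i : ℝ) + 1)⁻¹ ^ 2 * ∫ ω, d i ω ^ 2 ∂μ := fun i => by
      simp_rw [← Pi.sub_apply, hMsucc, Pi.smul_apply, smul_eq_mul, mul_pow]
      exact integral_const_mul _ _
    rw [hM.integral_sq_eq_add_sum_integral_sq_sub hM2, sum_congr rfl fun i _ => hinc i]
    simp only [M, range_zero, sum_empty, Pi.zero_apply, ne_eq, OfNat.ofNat_ne_zero,
      not_false_eq_true, zero_pow, integral_zero, zero_add]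
    exact hsum.sum_le_tsum _ fun j _ => by positivity
  filter_upwards [hM.exists_ae_tendsto_of_integral_sq_le hM2 hB] with ω ⟨c, hc⟩
  exact tendsto_cesaro_zero_of_tendsto_sum_inv_succ_mul (l := c) (by simpa [M] using hc)

end

/-- Lemma 2 in BCPR. Let `(Y n)` be a sequence of real random
variables adapted to a filtration `(ℱ n)`. If `∑_{j≥1} j⁻² E[Y j ^ 2] < ∞` and
`E[Y j | ℱ (j-1)]` converges almost surely to a random variable `Y`, then the
Cesàro means `(1/n) ∑_{j=1}^n Y j` converge almost surely to `Y`. -/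
theorem stmt1
    {Ω : Type*} {m0 : MeasurableSpace Ω} {μ : Measure Ω} [IsProbabilityMeasure μ]
    (ℱ : Filtration ℕ m0) (Y : ℕ → Ω → ℝ) (Ylim : Ω → ℝ)
    (hadp : ∀ j, StronglyMeasurable[ℱ j] (Y j))
    (hint : ∀ j, MemLp (Y j) 2 μ)
    (hsum : Summable (fun j : ℕ => (↑(j + 1) : ℝ)⁻¹ ^ 2 * ∫ ω, (Y (j + 1) ω) ^ 2 ∂μ))
    (hconv : ∀ᵐ ω ∂μ, Tendsto (fun j : ℕ => (μ[Y (j + 1)|ℱ j]) ω) atTop (𝓝 (Ylim ω))) :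
    ∀ᵐ ω ∂μ, Tendsto
      (fun n : ℕ => (n : ℝ)⁻¹ * ∑ j ∈ Finset.Icc 1 n, Y j ω)
      atTop (𝓝 (Ylim ω)) := by
  set d : ℕ → Ω → ℝ := fun j => Y (j + 1) - μ[Y (j + 1)|ℱ j]
  have hd2 : ∀ j, MemLp (d j) 2 μ := fun j => (hint _).sub ((hint _).condExp one_le_two)
  have hdsum : Summable fun j : ℕ => ((j : ℝ) + 1)⁻¹ ^ 2 * ∫ ω, d j ω ^ 2 ∂μ := by
    refine hsum.of_nonneg_of_le (fun j => by positivity) fun j => ?_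
    push_cast
    exact mul_le_mul_of_nonneg_left (integral_sq_sub_condExp_le (ℱ.le j) (hint _)) (by positivity)
  have hd := ae_tendsto_cesaro_zero_of_condExp_ae_eq_zero
    (fun j => (hadp (j + 1)).sub (stronglyMeasurable_condExp.mono (ℱ.mono j.le_succ))) hd2
    (fun j => condExp_sub_condExp_ae_eq_zero (ℱ.le j) ((hint _).integrable one_le_two)) hdsum
  filter_upwards [hd, hconv] with ω hdω hCω
  have hsplit := hdω.add hCω.cesaro
  rw [zero_add] at hsplit
  refine hsplit.congr fun n => ?_
  simp only [Pi.sub_apply, ← mul_add, ← sum_add_distrib, sub_add_cancel]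
  rw [range_eq_Ico, sum_Ico_add' (Y · ω), zero_add, Ico_add_one_right_eq_Icc]
end

section
/- Let F = (F_n) be a filtration with F_∞ = ⋁_n F_n. For each sequence (Y_n) of integrable complex random variables that is dominated in L¹ (i.e. |Y_n| ≤ W for all n for some integrable W) and converges almost surely to a random variable Y, the conditional expectations E[Y_n | F_n] converge almost surely to E[Y | F_∞]. -/
/-!
Let `g N = sup_{k ≥ N} ‖Y k - Y‖`. It is dominated by `2 W` and tends to `0` a.s., so
`‖g N‖₁ → 0`, and hence also `‖E[g N | ℱ∞]‖₁ → 0`; along a subsequence `E[g N | ℱ∞] → 0` a.s.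
For `n ≥ N` we have `‖E[Y n | ℱ n] - E[Y | ℱ n]‖ ≤ E[g N | ℱ n]`, and by Lévy's upward theorem
`E[g N | ℱ n] → E[g N | ℱ∞]` and `E[Y | ℱ n] → E[Y | ℱ∞]` a.s. Therefore
`limsup ‖E[Y n | ℱ n] - E[Y | ℱ∞]‖ ≤ E[g N | ℱ∞]` for every `N`, and the right side can be made
arbitrarily small.
-/

open MeasureTheory ProbabilityTheory Filter Set
open scoped Topology

lemma tendsto_of_forall_eventually_dist_le {α ι κ : Type*} [PseudoMetricSpace α] {l : Filter ι}
    {a b : ι → α} {L : α} {c : κ → ι → ℝ} {c' : κ → ℝ} (hb : Tendsto b l (𝓝 L))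
    (hc : ∀ N, Tendsto (c N) l (𝓝 (c' N))) (hdist : ∀ N, ∀ᶠ n in l, dist (a n) (b n) ≤ c N n)
    (hsmall : ∀ ε > 0, ∃ N, c' N < ε) : Tendsto a l (𝓝 L) := by
  refine Metric.tendsto_nhds.2 fun ε hε => ?_
  obtain ⟨N, hN⟩ := hsmall (ε / 2) (half_pos hε)
  filter_upwards [hdist N, (hc N).eventually (gt_mem_nhds hN),
    Metric.tendsto_nhds.1 hb _ (half_pos hε)] with n hab hcn hbn
  calc dist (a n) L ≤ dist (a n) (b n) + dist (b n) L := dist_triangle _ _ _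
    _ < ε / 2 + ε / 2 := add_lt_add_of_le_of_lt (hab.trans hcn.le) hbn
    _ = ε := add_halves ε

lemma le_iSup_nat_add {a : ℕ → ℝ} (ha : BddAbove (range a)) {N n : ℕ} (h : N ≤ n) :
    a n ≤ ⨆ k, a (N + k) := by
  obtain ⟨k, rfl⟩ := Nat.exists_eq_add_of_le h
  exact le_ciSup (ha.mono (range_comp_subset_range (N + ·) a)) k

lemma tendsto_iSup_nat_add_of_tendsto_zero {a : ℕ → ℝ} (h0 : ∀ n, 0 ≤ a n)
    (ha : Tendsto a atTop (𝓝 0)) : Tendsto (fun N => ⨆ k, a (N + k)) atTop (𝓝 0) := by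
  refine tendsto_order.2 ⟨fun b hb => Eventually.of_forall fun N =>
    hb.trans_le (Real.iSup_nonneg fun k => h0 _), fun b hb => ?_⟩
  obtain ⟨M, hM⟩ := eventually_atTop.1 (ha.eventually (gt_mem_nhds (half_pos hb)))
  filter_upwards [eventually_ge_atTop M] with N hN
  exact (ciSup_le fun k => (hM _ (by omega)).le).trans_lt (half_lt_self hb)

lemma ae_norm_le_of_tendsto {Ω E : Type*} [NormedAddCommGroup E] {m0 : MeasurableSpace Ω}
    {μ : Measure Ω} {f : ℕ → Ω → E} {g : Ω → E} {W : Ω → ℝ}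
    (hfW : ∀ n, ∀ᵐ ω ∂μ, ‖f n ω‖ ≤ W ω)
    (hlim : ∀ᵐ ω ∂μ, Tendsto (fun n => f n ω) atTop (𝓝 (g ω))) :
    ∀ᵐ ω ∂μ, ‖g ω‖ ≤ W ω := by
  filter_upwards [hlim, ae_all_iff.2 hfW] with ω hω hωW
  exact le_of_tendsto hω.norm (Eventually.of_forall hωW)

section TailSup

variable {Ω : Type*} {m0 : MeasurableSpace Ω} {μ : Measure Ω} {d : ℕ → Ω → ℝ} {G : Ω → ℝ}

lemma ae_le_iSup_nat_add (hlim : ∀ᵐ ω ∂μ, Tendsto (d · ω) atTop (𝓝 0)) :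
    ∀ᵐ ω ∂μ, ∀ N n, N ≤ n → d n ω ≤ ⨆ k, d (N + k) ω := by
  filter_upwards [hlim] with ω hω N n hNn
  exact le_iSup_nat_add hω.bddAbove_range hNn

lemma ae_norm_iSup_nat_add_le (hd0 : ∀ n ω, 0 ≤ d n ω) (hdG : ∀ n, ∀ᵐ ω ∂μ, d n ω ≤ G ω) :
    ∀ᵐ ω ∂μ, ∀ N, ‖⨆ k, d (N + k) ω‖ ≤ G ω := by
  filter_upwards [ae_all_iff.2 hdG] with ω hω N
  rw [Real.norm_of_nonneg (Real.iSup_nonneg fun k => hd0 _ ω)]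
  exact ciSup_le fun k => hω _

lemma integrable_iSup_nat_add (hd : ∀ n, AEMeasurable (d n) μ) (hd0 : ∀ n ω, 0 ≤ d n ω)
    (hdG : ∀ n, ∀ᵐ ω ∂μ, d n ω ≤ G ω) (hG : Integrable G μ) (N : ℕ) :
    Integrable (fun ω => ⨆ k, d (N + k) ω) μ :=
  hG.mono' (AEMeasurable.iSup fun k => hd _).aestronglyMeasurable <| by
    filter_upwards [ae_norm_iSup_nat_add_le hd0 hdG] with ω hω using hω N

lemma tendsto_eLpNorm_iSup_nat_add (hd : ∀ n, AEMeasurable (d n) μ) (hd0 : ∀ n ω, 0 ≤ d n ω)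
    (hdG : ∀ n, ∀ᵐ ω ∂μ, d n ω ≤ G ω) (hG : Integrable G μ)
    (hlim : ∀ᵐ ω ∂μ, Tendsto (d · ω) atTop (𝓝 0)) :
    Tendsto (fun N => eLpNorm (fun ω => ⨆ k, d (N + k) ω) 1 μ) atTop (𝓝 0) := by
  have := tendsto_lintegral_norm_of_dominated_convergence (f := 0)
    (fun N => (integrable_iSup_nat_add hd hd0 hdG hG N).aestronglyMeasurable)
    hG.hasFiniteIntegral (fun N => (ae_norm_iSup_nat_add_le hd0 hdG).mono fun ω hω => hω N)
    (by filter_upwards [hlim] with ω hω using tendsto_iSup_nat_add_of_tendsto_zero (hd0 · ω) hω)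
  simpa only [eLpNorm_one_eq_lintegral_enorm, Pi.zero_apply, sub_zero, ofReal_norm] using this

end TailSup

section

variable {Ω : Type*} {m m0 : MeasurableSpace Ω} {μ : Measure Ω}

lemma ae_exists_lt_of_tendsto_eLpNorm_zero {h : ℕ → Ω → ℝ}
    (hm : ∀ N, AEStronglyMeasurable (h N) μ)
    (hh : Tendsto (fun N => eLpNorm (h N) 1 μ) atTop (𝓝 0)) :
    ∀ᵐ ω ∂μ, ∀ ε > 0, ∃ N, h N ω < ε := by
  obtain ⟨ns, -, hns⟩ := (tendstoInMeasure_of_tendsto_eLpNorm one_ne_zero hm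
    aestronglyMeasurable_zero (by simpa using hh)).exists_seq_tendsto_ae
  filter_upwards [hns] with ω hω ε hε
  obtain ⟨i, hi⟩ := (hω.eventually (gt_mem_nhds hε)).exists
  exact ⟨ns i, hi⟩

lemma dist_condExp_le_condExp {E : Type*} [NormedAddCommGroup E] [NormedSpace ℝ E]
    [CompleteSpace E] {f₁ f₂ : Ω → E} {g : Ω → ℝ} (hf₁ : Integrable f₁ μ)
    (hf₂ : Integrable f₂ μ) (hg : Integrable g μ) (h : ∀ᵐ ω ∂μ, ‖f₁ ω - f₂ ω‖ ≤ g ω) :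
    ∀ᵐ ω ∂μ, dist (μ[f₁|m] ω) (μ[f₂|m] ω) ≤ μ[g|m] ω := by
  filter_upwards [condExp_sub hf₁ hf₂ m, norm_condExp_le (m := m) (μ := μ) (f₁ - f₂),
    condExp_mono (m := m) (hf₁.sub hf₂).norm hg h] with ω hsub hnorm hmono
  rw [dist_eq_norm, ← Pi.sub_apply, ← hsub]
  exact hnorm.trans hmono

lemma tendsto_ae_condExp_complex [IsFiniteMeasure μ] (ℱ : Filtration ℕ m0) {g : Ω → ℂ}
    (hg : Integrable g μ) :
    ∀ᵐ ω ∂μ, Tendsto (fun n => μ[g|ℱ n] ω) atTop (𝓝 (μ[g|⨆ n, ℱ n] ω)) := by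
  have hre : ∀ m, (fun ω => (μ[g|m] ω).re) =ᵐ[μ] μ[fun ω => (g ω).re|m] := fun m =>
    Complex.reCLM.comp_condExp_comm hg
  have him : ∀ m, (fun ω => (μ[g|m] ω).im) =ᵐ[μ] μ[fun ω => (g ω).im|m] := fun m =>
    Complex.imCLM.comp_condExp_comm hg
  filter_upwards [tendsto_ae_condExp (ℱ := ℱ) (μ := μ) (fun ω => (g ω).re),
    tendsto_ae_condExp (ℱ := ℱ) (μ := μ) (fun ω => (g ω).im),
    ae_all_iff.2 fun n => hre (ℱ n), ae_all_iff.2 fun n => him (ℱ n),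
    hre (⨆ n, ℱ n), him (⨆ n, ℱ n)] with ω hre_lim him_lim hre_n him_n hre_sup him_sup
  simp only [← hre_n, ← hre_sup] at hre_lim
  simp only [← him_n, ← him_sup] at him_lim
  simpa only [Complex.re_add_im] using hre_lim.ofReal.add (him_lim.ofReal.mul_const Complex.I)

end

/-- Blackwell–Dubins / Lemma A.2 in Crimaldi. Let `ℱ` be a
filtration with `ℱ∞ = ⨆ n, ℱ n`. For each sequence `(Y n)` of integrable complex
random variables which is dominated in `L¹` and converges almost surely to `Y`,
the conditional expectations `E[Y n | ℱ n]` converge a.s. to `E[Y | ℱ∞]`. -/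
theorem stmt2
    {Ω : Type*} {m0 : MeasurableSpace Ω} {μ : Measure Ω} [IsProbabilityMeasure μ]
    (ℱ : Filtration ℕ m0) (Y : ℕ → Ω → ℂ) (Ylim : Ω → ℂ) (W : Ω → ℝ)
    (hint : ∀ n, Integrable (Y n) μ)
    (hW : Integrable W μ)
    (hdom : ∀ n, ∀ᵐ ω ∂μ, ‖Y n ω‖ ≤ W ω)
    (hconv : ∀ᵐ ω ∂μ, Tendsto (fun n => Y n ω) atTop (𝓝 (Ylim ω))) :
    ∀ᵐ ω ∂μ, Tendsto (fun n => (μ[Y n|ℱ n]) ω) atTop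
      (𝓝 ((μ[Ylim|(⨆ n, ℱ n : MeasurableSpace Ω)]) ω)) := by
  have hYlim_le := ae_norm_le_of_tendsto hdom hconv
  have hYlim : Integrable Ylim μ := hW.mono'
    (aestronglyMeasurable_of_tendsto_ae _ (fun n => (hint n).aestronglyMeasurable) hconv) hYlim_le
  set d : ℕ → Ω → ℝ := fun n ω => ‖Y n ω - Ylim ω‖
  have hd : ∀ n, AEMeasurable (d n) μ := fun n =>
    ((hint n).sub hYlim).aestronglyMeasurable.norm.aemeasurable
  have hd0 : ∀ n ω, 0 ≤ d n ω := fun _ _ => norm_nonneg _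
  have hdW : ∀ n, ∀ᵐ ω ∂μ, d n ω ≤ W ω + W ω := fun n => by
    filter_upwards [hdom n, hYlim_le] with ω h₁ h₂
    exact (norm_sub_le _ _).trans (add_le_add h₁ h₂)
  have hdlim : ∀ᵐ ω ∂μ, Tendsto (d · ω) atTop (𝓝 0) := by
    filter_upwards [hconv] with ω hω using tendsto_iff_norm_sub_tendsto_zero.1 hω
  set g : ℕ → Ω → ℝ := fun N ω => ⨆ k, d (N + k) ω
  have hg := integrable_iSup_nat_add hd hd0 hdW (hW.add hW)
  have hdist : ∀ N, ∀ᵐ ω ∂μ, ∀ᶠ n in atTop,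
      dist (μ[Y n|ℱ n] ω) (μ[Ylim|ℱ n] ω) ≤ μ[g N|ℱ n] ω := fun N => by
    refine (ae_all_iff.2 fun n => eventually_imp_distrib_left.2 fun hNn => ?_).mono
      fun ω hω => eventually_atTop.2 ⟨N, hω⟩
    exact dist_condExp_le_condExp (hint n) hYlim (hg N)
      ((ae_le_iSup_nat_add hdlim).mono fun ω hω => hω N n hNn)
  have hsmall := ae_exists_lt_of_tendsto_eLpNorm_zero
    (fun N => (integrable_condExp (m := ⨆ n, ℱ n) (f := g N)).aestronglyMeasurable)
    (tendsto_of_tendsto_of_tendsto_of_le_of_le tendsto_const_nhds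
      (tendsto_eLpNorm_iSup_nat_add hd hd0 hdW (hW.add hW) hdlim) (fun _ => zero_le)
      (fun N => eLpNorm_condExp_le_eLpNorm _ le_rfl))
  filter_upwards [tendsto_ae_condExp_complex ℱ hYlim, ae_all_iff.2 hdist, hsmall,
    ae_all_iff.2 fun N => tendsto_ae_condExp (ℱ := ℱ) (μ := μ) (g N)] with ω hYlim_lim hdist_ω
      hsmall_ω hg_lim
  exact tendsto_of_forall_eventually_dist_le hYlim_lim hg_lim hdist_ω hsmall_ω
end

section
/- In the HRRU model, the sequence (Z_n) of urn proportions satisfies Z_n - Z_{n-1} = R_n (X_n - N_n Z_{n-1}) / S_n, and (Z_n) is a martingale with respect to the filtration (H_n) where H_{n-1} = F_{n-1} ∨ σ(N_n) ∨ σ(R_n). -/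
open MeasureTheory ProbabilityTheory Filter
open scoped Topology

noncomputable section

/-- Total number of balls at time `n` in the HRRU model with initial composition
`a + b` and draws/reinforcements `N`, `R` (time is indexed from `1`). -/
def hrruS {Ω : Type*} (a b : ℕ) (N R : ℕ → Ω → ℕ) (n : ℕ) (ω : Ω) : ℕ :=
  a + b + ∑ j ∈ Finset.Icc 1 n, N j ω * R j ω

/-- Number of balls of color A at time `n` in the HRRU model. -/
def hrruHa {Ω : Type*} (a : ℕ) (X R : ℕ → Ω → ℕ) (n : ℕ) (ω : Ω) : ℕ :=
  a + ∑ j ∈ Finset.Icc 1 n, X j ω * R j ω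

/-- Proportion of balls of color A at time `n` in the HRRU model. -/
def hrruZ {Ω : Type*} (a b : ℕ) (N X R : ℕ → Ω → ℕ) (n : ℕ) (ω : Ω) : ℝ :=
  (hrruHa a X R n ω : ℝ) / (hrruS a b N R n ω : ℝ)

/-- The hypergeometric probability mass function with parameters `Np, S, H`:
`P(X = k) = C(H,k) C(S-H, Np-k) / C(S,Np)`. -/
def hypergeomPMF (Np S H k : ℕ) : ℝ :=
  ((H.choose k : ℝ) * ((S - H).choose (Np - k) : ℝ)) / (S.choose Np : ℝ)

/-- The natural filtration `ℱ n = σ(N₁,X₁,R₁,…,N_n,X_n,R_n)` of the HRRU model. -/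
def hrruF {Ω : Type*} (N X R : ℕ → Ω → ℕ) (n : ℕ) : MeasurableSpace Ω :=
  ⨆ j ∈ Finset.Icc 1 n,
    (MeasurableSpace.comap (N j) ⊤ ⊔ MeasurableSpace.comap (X j) ⊤ ⊔
      MeasurableSpace.comap (R j) ⊤)

/-- The σ-field `𝒢 (n-1) = ℱ (n-1) ∨ σ(N n)` of the HRRU model. -/
def hrruG {Ω : Type*} (N X R : ℕ → Ω → ℕ) (n : ℕ) : MeasurableSpace Ω :=
  hrruF N X R n ⊔ MeasurableSpace.comap (N (n + 1)) ⊤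

/-- The σ-field `ℋ (n-1) = ℱ (n-1) ∨ σ(N n) ∨ σ(R n)` of the HRRU model. -/
def hrruHfilt {Ω : Type*} (N X R : ℕ → Ω → ℕ) (n : ℕ) : MeasurableSpace Ω :=
  hrruG N X R n ⊔ MeasurableSpace.comap (R (n + 1)) ⊤

/-- The HRRU (Hypergeometric Randomly Reinforced Urn) model: an urn starts with
`a ≥ 1` balls of color A and `b ≥ 1` balls of color B.  At each time `n ≥ 1`,
`N n` balls are drawn without replacement, `X n` of them being of color A, and
the drawn balls are returned together with `R n * X n` balls of color A and
`R n * (N n - X n)` balls of color B. -/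
structure IsHRRU {Ω : Type*} [m0 : MeasurableSpace Ω] (μ : Measure Ω)
    (a b : ℕ) (N X R : ℕ → Ω → ℕ) : Prop where
  ha : 1 ≤ a
  hb : 1 ≤ b
  measN : ∀ n, Measurable (N n)
  measX : ∀ n, Measurable (X n)
  measR : ∀ n, Measurable (R n)
  /-- (i): `N n` takes values in `{1, …, S (n-1)}`. -/
  rangeN : ∀ n, 1 ≤ n → ∀ ω, 1 ≤ N n ω ∧ N n ω ≤ hrruS a b N R (n - 1) ω
  /-- `X n ≤ N n`: one cannot extract more A-balls than balls. -/
  rangeX : ∀ n, 1 ≤ n → ∀ ω, X n ω ≤ N n ω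
  /-- `R n ∈ ℕ ∖ {0}`. -/
  rangeR : ∀ n, 1 ≤ n → ∀ ω, 1 ≤ R n ω
  /-- (ii): the conditional distribution of `X n` given
  `ℱ (n-1) ∨ σ(N n)` is hypergeometric with parameters `N n, S (n-1), H (n-1)`. -/
  hypergeom : ∀ n, 1 ≤ n → ∀ k : ℕ,
    (μ[fun ω => if X n ω = k then (1 : ℝ) else 0|hrruG N X R (n - 1)]) =ᵐ[μ]
      fun ω => hypergeomPMF (N n ω) (hrruS a b N R (n - 1) ω) (hrruHa a X R (n - 1) ω) k
  /-- (iii): `R n` is independent of `(N₁,X₁,R₁,…,N_{n-1},X_{n-1},R_{n-1},N_n,X_n)`. -/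
  indepR : ∀ n, 1 ≤ n →
    Indep (MeasurableSpace.comap (R n) ⊤)
      (hrruG N X R (n - 1) ⊔ MeasurableSpace.comap (X n) ⊤) μ

/-!
Writing `S (p + 1) = S p + N (p + 1) * R (p + 1)` turns the increment formula into algebra.
On the event `R (p + 1) = r` the increment of `Z` is
`φ r = r * (X (p + 1) - N (p + 1) * Z p) / (S p + N (p + 1) * r)`, a function of
`𝒢 p ∨ σ(X (p + 1))`, which is independent of `R (p + 1)`; hence the increment is centred given
`ℋ p = 𝒢 p ∨ σ(R (p + 1))` as soon as each `φ r` is centred given `𝒢 p`. On `N (p + 1) = m` the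
factor `r / (S p + m * r)` is `𝒢 p`-measurable and `X (p + 1) ≤ m`, so this comes down to the mean
`m * H / S = m * Z p` of the hypergeometric law.
-/

open Finset in
theorem Nat.sum_antidiagonal_mul_choose_mul_choose (H T m : ℕ) :
    ∑ ij ∈ antidiagonal (m + 1), ij.1 * (H + 1).choose ij.1 * T.choose ij.2
      = (H + 1) * (H + T).choose m := by
  rw [Nat.sum_antidiagonal_succ, Nat.add_choose_eq H T m, mul_sum]
  simp only [zero_mul, zero_add]
  refine sum_congr rfl fun ij _ => ?_
  rw [← mul_assoc, Nat.add_one_mul_choose_eq, mul_comm (ij.1 + 1)]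

theorem sum_mul_hypergeomPMF {m S H : ℕ} (hm : m ≤ S) (hH : H ≤ S) :
    ∑ k ∈ Finset.range (m + 1), (k : ℝ) * hypergeomPMF m S H k = m * H / S := by
  rcases m with _ | m
  · simp
  rcases H with _ | H
  · refine (Finset.sum_eq_zero fun k _ => ?_).trans (by simp)
    rcases k with _ | k <;> simp [hypergeomPMF]
  obtain ⟨T, rfl⟩ := Nat.exists_eq_add_of_le hH
  have hSC : ((H + 1 + T : ℕ) : ℝ) * (H + T).choose m = (H + 1 + T).choose (m + 1) * (m + 1) := by
    have := Nat.add_one_mul_choose_eq (H + T) m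
    rw [show H + T + 1 = H + 1 + T by ring] at this
    exact_mod_cast this
  have key := congrArg (Nat.cast : ℕ → ℝ) (Nat.sum_antidiagonal_mul_choose_mul_choose H T m)
  rw [Finset.Nat.sum_antidiagonal_eq_sum_range_succ_mk] at key
  push_cast at key
  simp only [hypergeomPMF, Nat.add_sub_cancel_left, mul_div_assoc', ← Finset.sum_div, ← mul_assoc]
  rw [div_eq_div_iff (by exact_mod_cast (Nat.choose_pos hm).ne') (by positivity), key]
  push_cast at hSC ⊢
  linear_combination (H + 1 : ℝ) * hSC

section ConditionalExpectation

theorem exists_measurableSet_inter_preimage_singleton_eq {Ω β : Type*} {m : MeasurableSpace Ω}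
    {mβ : MeasurableSpace β} {f : Ω → β} {A : Set Ω}
    (hA : MeasurableSet[m ⊔ mβ.comap f] A) (r : β) :
    ∃ G, MeasurableSet[m] G ∧ A ∩ f ⁻¹' {r} = G ∩ f ⁻¹' {r} := by
  induction hA with
  | basic u hu =>
    rcases hu with hu | ⟨s, -, rfl⟩
    · exact ⟨u, hu, rfl⟩
    by_cases hr : r ∈ s
    · exact ⟨Set.univ, .univ, by ext ω; simp +contextual [hr]⟩
    · exact ⟨∅, .empty, by ext ω; simpa using fun h (e : f ω = r) => hr (e ▸ h)⟩
  | empty => exact ⟨∅, .empty, rfl⟩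
  | compl t _ ih =>
    obtain ⟨G, hG, htG⟩ := ih
    refine ⟨Gᶜ, hG.compl, ?_⟩
    ext ω
    have := Set.ext_iff.mp htG ω
    simp only [Set.mem_inter_iff, Set.mem_compl_iff] at this ⊢
    tauto
  | iUnion t _ ih =>
    choose G hG htG using ih
    exact ⟨⋃ i, G i, .iUnion hG, by simp only [Set.iUnion_inter, htG]⟩

variable {Ω : Type*} {m m₁ m₂ : MeasurableSpace Ω} [m₀ : MeasurableSpace Ω] {μ : Measure Ω}
variable {E : Type*} [NormedAddCommGroup E] [NormedSpace ℝ E] [CompleteSpace E]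

theorem condExp_ae_eq_zero_of_forall_indicator_preimage {β : Type*}
    [MeasurableSpace β] [MeasurableSingletonClass β] [Countable β] {N : Ω → β}
    (hN : Measurable[m] N) {f : Ω → E} (hf : Integrable f μ)
    (h : ∀ n, μ[(N ⁻¹' {n}).indicator f | m] =ᵐ[μ] 0) : μ[f | m] =ᵐ[μ] 0 := by
  have hn : ∀ n, ∀ᵐ ω ∂μ, N ω = n → μ[f | m] ω = 0 := fun n => by
    filter_upwards [(condExp_indicator hf (hN (measurableSet_singleton n))).symm.trans (h n)]
      with ω hω hNω
    simpa [Set.indicator_of_mem (show ω ∈ N ⁻¹' {n} from hNω)] using hω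
  filter_upwards [ae_all_iff.2 hn] with ω hω using hω _ rfl

variable [IsFiniteMeasure μ] {β : Type*} {mβ : MeasurableSpace β}
  [MeasurableSingletonClass β] {R : Ω → β}

theorem condExp_indicator_preimage_ae_eq_zero_of_indep (h₁₂ : m₁ ≤ m₂) (h₂ : m₂ ≤ m₀)
    (hR : Measurable R) (hind : Indep (mβ.comap R) m₂ μ) {φ : Ω → ℝ}
    (hφm : StronglyMeasurable[m₂] φ) (hφi : Integrable φ μ) (hφ : μ[φ | m₁] =ᵐ[μ] 0) (r : β) :
    μ[(R ⁻¹' {r}).indicator φ | m₁ ⊔ mβ.comap R] =ᵐ[μ] 0 := by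
  have hm₁ : m₁ ≤ m₀ := h₁₂.trans h₂
  have hRr : MeasurableSet[mβ.comap R] (R ⁻¹' {r}) := ⟨{r}, measurableSet_singleton r, rfl⟩
  refine (ae_eq_condExp_of_forall_setIntegral_eq (sup_le hm₁ hR.comap_le) (hφi.indicator
    (hR.comap_le _ hRr)) (fun _ _ _ => integrableOn_zero) (fun A hA _ => ?_)
    aestronglyMeasurable_zero).symm
  obtain ⟨G, hG, hAG⟩ := exists_measurableSet_inter_preimage_singleton_eq hA r
  have hφG : ∫ ω in G, φ ω ∂μ = 0 := by
    rw [← setIntegral_condExp hm₁ hφi hG, setIntegral_congr_ae (hm₁ _ hG) (hφ.mono fun _ h _ => h)]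
    simp
  have hGφ : StronglyMeasurable[m₂] (G.indicator φ) := hφm.indicator (h₁₂ _ hG)
  -- independence of `R` and `m₂` makes `∫ (G ∩ {R = r}), φ` factor through `∫ G, φ`
  rw [setIntegral_indicator (hR.comap_le _ hRr), hAG, Set.inter_comm,
    ← setIntegral_indicator (hm₁ _ hG), ← setIntegral_condExp hR.comap_le
      (hφi.indicator (hm₁ _ hG)) hRr,
    setIntegral_congr_ae (hR.comap_le _ hRr)
      ((condExp_indep_eq h₂ hR.comap_le hGφ hind.symm).mono fun _ h _ => h),
    integral_indicator (hm₁ _ hG), hφG]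
  simp

theorem condExp_comp_ae_eq_zero_of_indep [Countable β] (h₁₂ : m₁ ≤ m₂) (h₂ : m₂ ≤ m₀)
    (hR : Measurable R) (hind : Indep (mβ.comap R) m₂ μ) {φ : β → Ω → ℝ}
    (hφm : ∀ r, StronglyMeasurable[m₂] (φ r)) (hφi : ∀ r, Integrable (φ r) μ)
    (hφ : ∀ r, μ[φ r | m₁] =ᵐ[μ] 0) (hD : Integrable (fun ω => φ (R ω) ω) μ) :
    μ[fun ω => φ (R ω) ω | m₁ ⊔ mβ.comap R] =ᵐ[μ] 0 := by
  refine condExp_ae_eq_zero_of_forall_indicator_preimage (m := m₁ ⊔ mβ.comap R)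
    ((comap_measurable R).mono le_sup_right le_rfl) hD fun r => ?_
  rw [show (R ⁻¹' {r}).indicator (fun ω => φ (R ω) ω) = (R ⁻¹' {r}).indicator (φ r) from
    Set.indicator_congr fun ω hω => by rw [show R ω = r from hω]]
  exact condExp_indicator_preimage_ae_eq_zero_of_indep h₁₂ h₂ hR hind (hφm r) (hφi r) (hφ r) r

theorem condExp_indicator_natCast_ae_eq_sum (hm : m ≤ m₀) {X : Ω → ℕ}
    (hX : Measurable X) {p : ℕ → Ω → ℝ}
    (hp : ∀ k, μ[fun ω => if X ω = k then (1 : ℝ) else 0 | m] =ᵐ[μ] p k)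
    {E : Set Ω} (hE : MeasurableSet[m] E) {M : ℕ} (hXM : ∀ ω ∈ E, X ω ≤ M) :
    μ[E.indicator (fun ω => (X ω : ℝ)) | m] =ᵐ[μ]
      E.indicator (fun ω => ∑ k ∈ Finset.range (M + 1), (k : ℝ) * p k ω) := by
  set e : ℕ → Ω → ℝ := fun k ω => if X ω = k then 1 else 0
  have he : ∀ k, Integrable (e k) μ := fun k =>
    .of_bound (measurable_const.ite (hX (measurableSet_singleton k))
      measurable_const).aestronglyMeasurable 1 (ae_of_all _ fun ω => by
        simp only [e]; split_ifs <;> simp)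
  have hsum : E.indicator (fun ω => (X ω : ℝ)) =
      ∑ k ∈ Finset.range (M + 1), (k : ℝ) • E.indicator (e k) := by
    ext ω
    by_cases hω : ω ∈ E
    · simp [hω, e, Nat.lt_succ_iff.2 (hXM ω hω)]
    · simp [hω]
  have hterm : ∀ k : ℕ, μ[(k : ℝ) • E.indicator (e k) | m] =ᵐ[μ] (k : ℝ) • E.indicator (p k) :=
    fun k => (condExp_smul _ _ m).trans (((condExp_indicator (he k) hE).trans
      (hp k).indicator).const_smul _)
  rw [hsum]
  refine (condExp_finsetSum (fun k _ => ((he k).indicator (hm _ hE)).smul _) m).trans ?_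
  refine (eventuallyEq_sum fun k _ => hterm k).trans (EventuallyEq.of_eq ?_)
  ext ω
  by_cases hω : ω ∈ E <;> simp [hω]

end ConditionalExpectation

section Urn

variable {Ω : Type*} {a b : ℕ} {N X R : ℕ → Ω → ℕ}

theorem hrruS_succ (n : ℕ) (ω : Ω) :
    hrruS a b N R (n + 1) ω = hrruS a b N R n ω + N (n + 1) ω * R (n + 1) ω := by
  rw [hrruS, hrruS, Finset.sum_Icc_succ_top (by omega), ← add_assoc]

theorem hrruHa_succ (n : ℕ) (ω : Ω) :
    hrruHa a X R (n + 1) ω = hrruHa a X R n ω + X (n + 1) ω * R (n + 1) ω := by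
  rw [hrruHa, hrruHa, Finset.sum_Icc_succ_top (by omega), ← add_assoc]

theorem hrruS_pos (hab : 0 < a + b) (n : ℕ) (ω : Ω) : 0 < hrruS a b N R n ω :=
  hab.trans_le (Nat.le_add_right _ _)

theorem hrruHa_le_hrruS (hX : ∀ j, 1 ≤ j → ∀ ω, X j ω ≤ N j ω) (n : ℕ) (ω : Ω) :
    hrruHa a X R n ω ≤ hrruS a b N R n ω := by
  rw [hrruHa, hrruS, add_right_comm]
  refine Nat.le_add_right_of_le (Nat.add_le_add_left (Finset.sum_le_sum fun j hj => ?_) a)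
  exact Nat.mul_le_mul_right _ (hX j (Finset.mem_Icc.mp hj).1 ω)

theorem hrruZ_nonneg (n : ℕ) (ω : Ω) : 0 ≤ hrruZ a b N X R n ω := by
  unfold hrruZ; positivity

theorem hrruZ_le_one (hX : ∀ j, 1 ≤ j → ∀ ω, X j ω ≤ N j ω) (n : ℕ) (ω : Ω) :
    hrruZ a b N X R n ω ≤ 1 :=
  div_le_one_of_le₀ (by exact_mod_cast hrruHa_le_hrruS hX n ω) (Nat.cast_nonneg _)

theorem hrruZ_succ_sub (hab : 0 < a + b) (p : ℕ) (ω : Ω) :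
    hrruZ a b N X R (p + 1) ω - hrruZ a b N X R p ω =
      R (p + 1) ω * (X (p + 1) ω - N (p + 1) ω * hrruZ a b N X R p ω) /
        hrruS a b N R (p + 1) ω := by
  have hS : (0 : ℝ) < hrruS a b N R p ω := by exact_mod_cast hrruS_pos hab p ω
  have hS' : (0 : ℝ) < hrruS a b N R (p + 1) ω := by exact_mod_cast hrruS_pos hab (p + 1) ω
  unfold hrruZ
  rw [hrruS_succ, hrruHa_succ] at *
  push_cast at *
  field_simp
  ring

/-- The increment `Z (p + 1) - Z p` on the event `R (p + 1) = r`. -/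
def hrruIncr (a b : ℕ) (N X R : ℕ → Ω → ℕ) (p r : ℕ) (ω : Ω) : ℝ :=
  r * (X (p + 1) ω - N (p + 1) ω * hrruZ a b N X R p ω) / (hrruS a b N R p ω + N (p + 1) ω * r)

theorem hrruZ_succ_sub_eq_hrruIncr (hab : 0 < a + b) (p : ℕ) (ω : Ω) :
    hrruZ a b N X R (p + 1) ω - hrruZ a b N X R p ω = hrruIncr a b N X R p (R (p + 1) ω) ω := by
  rw [hrruZ_succ_sub hab, hrruIncr, hrruS_succ]
  push_cast
  rfl

theorem abs_hrruIncr_le_one (hab : 0 < a + b) (hX : ∀ j, 1 ≤ j → ∀ ω, X j ω ≤ N j ω)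
    (p r : ℕ) (ω : Ω) : |hrruIncr a b N X R p r ω| ≤ 1 := by
  have hS : (0 : ℝ) < hrruS a b N R p ω := by exact_mod_cast hrruS_pos hab p ω
  have hXN : (X (p + 1) ω : ℝ) ≤ N (p + 1) ω := by exact_mod_cast hX (p + 1) p.succ_pos ω
  have hZ0 := hrruZ_nonneg (a := a) (b := b) (N := N) (X := X) (R := R) p ω
  have hZ1 := hrruZ_le_one (a := a) (b := b) (R := R) hX p ω
  have hdev : |(X (p + 1) ω : ℝ) - N (p + 1) ω * hrruZ a b N X R p ω| ≤ N (p + 1) ω :=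
    abs_sub_le_iff.2 ⟨by nlinarith, by nlinarith⟩
  have hD : (0 : ℝ) < hrruS a b N R p ω + N (p + 1) ω * r :=
    add_pos_of_pos_of_nonneg hS (by positivity)
  rw [hrruIncr, abs_div, abs_mul, Nat.abs_cast, abs_of_pos hD, div_le_one₀ hD]
  nlinarith [mul_le_mul_of_nonneg_left hdev (Nat.cast_nonneg r : (0 : ℝ) ≤ r)]

theorem le_hrruF {j n : ℕ} (hj : j ∈ Finset.Icc 1 n) :
    MeasurableSpace.comap (N j) ⊤ ⊔ MeasurableSpace.comap (X j) ⊤ ⊔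
      MeasurableSpace.comap (R j) ⊤ ≤ hrruF N X R n :=
  le_iSup₂ (f := fun j _ => MeasurableSpace.comap (N j) ⊤ ⊔ MeasurableSpace.comap (X j) ⊤ ⊔
    MeasurableSpace.comap (R j) ⊤) j hj

theorem measurable_hrruS (n : ℕ) : Measurable[hrruF N X R n] (hrruS a b N R n) :=
  measurable_const.add <| Finset.measurable_sum _ fun _ hj =>
    ((comap_measurable _).mono (le_sup_left.trans (le_sup_left.trans (le_hrruF hj))) le_rfl).mul
      ((comap_measurable _).mono (le_sup_right.trans (le_hrruF hj)) le_rfl)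

theorem measurable_hrruHa (n : ℕ) : Measurable[hrruF N X R n] (hrruHa a X R n) :=
  measurable_const.add <| Finset.measurable_sum _ fun _ hj =>
    ((comap_measurable _).mono (le_sup_right.trans (le_sup_left.trans (le_hrruF hj))) le_rfl).mul
      ((comap_measurable _).mono (le_sup_right.trans (le_hrruF hj)) le_rfl)

theorem measurable_hrruZ (n : ℕ) : Measurable[hrruF N X R n] (hrruZ a b N X R n) :=
  (measurable_from_top.comp (measurable_hrruHa n)).div
    (measurable_from_top.comp (measurable_hrruS n))

theorem hrruF_le_hrruHfilt (n : ℕ) : hrruF N X R n ≤ hrruHfilt N X R n :=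
  le_sup_left.trans le_sup_left

theorem measurable_N_succ_hrruG (n : ℕ) : Measurable[hrruG N X R n] (N (n + 1)) :=
  (comap_measurable _).mono le_sup_right le_rfl

theorem measurable_hrruIncr (p r : ℕ) :
    Measurable[hrruG N X R p ⊔ MeasurableSpace.comap (X (p + 1)) ⊤] (hrruIncr a b N X R p r) := by
  set m := hrruG N X R p ⊔ MeasurableSpace.comap (X (p + 1)) ⊤
  have hF : hrruF N X R p ≤ m := le_sup_left.trans le_sup_left
  have hN : Measurable[m] fun ω => (N (p + 1) ω : ℝ) :=
    measurable_from_top.comp ((measurable_N_succ_hrruG p).mono le_sup_left le_rfl)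
  have hX : Measurable[m] fun ω => (X (p + 1) ω : ℝ) :=
    measurable_from_top.comp ((comap_measurable (X (p + 1))).mono le_sup_right le_rfl)
  have hS : Measurable[m] fun ω => (hrruS a b N R p ω : ℝ) :=
    measurable_from_top.comp ((measurable_hrruS p).mono hF le_rfl)
  exact (measurable_const.mul (hX.sub (hN.mul ((measurable_hrruZ p).mono hF le_rfl)))).div
    (hS.add (hN.mul measurable_const))

end Urn

namespace IsHRRU

variable {Ω : Type*} [m0 : MeasurableSpace Ω] {μ : Measure Ω} {a b : ℕ} {N X R : ℕ → Ω → ℕ}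

theorem hrruF_le (h : IsHRRU μ a b N X R) (n : ℕ) : hrruF N X R n ≤ m0 :=
  iSup₂_le fun j _ => sup_le (sup_le (h.measN j).comap_le (h.measX j).comap_le) (h.measR j).comap_le

theorem hrruG_le (h : IsHRRU μ a b N X R) (n : ℕ) : hrruG N X R n ≤ m0 :=
  sup_le (h.hrruF_le n) (h.measN (n + 1)).comap_le

theorem hrruHfilt_le (h : IsHRRU μ a b N X R) (n : ℕ) : hrruHfilt N X R n ≤ m0 :=
  sup_le (h.hrruG_le n) (h.measR (n + 1)).comap_le

theorem add_pos (h : IsHRRU μ a b N X R) : 0 < a + b :=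
  h.ha.trans (Nat.le_add_right a b)

variable [IsFiniteMeasure μ]

theorem integrable_hrruZ (h : IsHRRU μ a b N X R) (n : ℕ) : Integrable (hrruZ a b N X R n) μ :=
  .of_bound ((measurable_hrruZ n).mono (h.hrruF_le n) le_rfl).aestronglyMeasurable 1
    (ae_of_all _ fun ω => by
      rw [Real.norm_eq_abs, abs_of_nonneg (hrruZ_nonneg n ω)]
      exact hrruZ_le_one h.rangeX n ω)

theorem integrable_hrruIncr (h : IsHRRU μ a b N X R) (p r : ℕ) :
    Integrable (hrruIncr a b N X R p r) μ :=
  .of_bound ((measurable_hrruIncr p r).mono (sup_le (h.hrruG_le p) (h.measX (p + 1)).comap_le)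
    le_rfl).aestronglyMeasurable 1 (ae_of_all _ (abs_hrruIncr_le_one h.add_pos h.rangeX p r))

theorem condExp_indicator_X_ae_eq (h : IsHRRU μ a b N X R) (p m : ℕ) :
    μ[(N (p + 1) ⁻¹' {m}).indicator (fun ω => (X (p + 1) ω : ℝ)) | hrruG N X R p] =ᵐ[μ]
      (N (p + 1) ⁻¹' {m}).indicator (fun ω => m * hrruZ a b N X R p ω) := by
  refine (condExp_indicator_natCast_ae_eq_sum (h.hrruG_le p) (h.measX (p + 1))
    (h.hypergeom (p + 1) p.succ_pos) (measurable_N_succ_hrruG p (measurableSet_singleton m))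
    (M := m) fun ω (hω : N (p + 1) ω = m) => hω ▸ h.rangeX (p + 1) p.succ_pos ω).trans
    (EventuallyEq.of_eq (Set.indicator_congr fun ω (hω : N (p + 1) ω = m) => ?_))
  subst hω
  have hNS : N (p + 1) ω ≤ hrruS a b N R p ω := (h.rangeN (p + 1) p.succ_pos ω).2
  exact (sum_mul_hypergeomPMF hNS (hrruHa_le_hrruS h.rangeX p ω)).trans (mul_div_assoc _ _ _)

theorem integrable_indicator_X (h : IsHRRU μ a b N X R) (p m : ℕ) :
    Integrable ((N (p + 1) ⁻¹' {m}).indicator fun ω => (X (p + 1) ω : ℝ)) μ :=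
  .of_bound ((measurable_from_top.comp (h.measX (p + 1))).indicator
    (h.measN (p + 1) (measurableSet_singleton m))).aestronglyMeasurable m
    (ae_of_all _ fun ω => by
      by_cases hω : N (p + 1) ω = m
      · rw [Set.indicator_of_mem (Set.mem_preimage.2 hω), Real.norm_natCast, Nat.cast_le, ← hω]
        exact h.rangeX (p + 1) p.succ_pos ω
      · simp [hω])

theorem condExp_indicator_X_sub_ae_eq_zero (h : IsHRRU μ a b N X R) (p m : ℕ) :
    μ[(N (p + 1) ⁻¹' {m}).indicator (fun ω => (X (p + 1) ω : ℝ)) -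
        (N (p + 1) ⁻¹' {m}).indicator (fun ω => m * hrruZ a b N X R p ω) | hrruG N X R p]
      =ᵐ[μ] 0 := by
  have hE : MeasurableSet[hrruG N X R p] (N (p + 1) ⁻¹' {m}) :=
    measurable_N_succ_hrruG p (measurableSet_singleton m)
  have hZE : Integrable ((N (p + 1) ⁻¹' {m}).indicator fun ω => m * hrruZ a b N X R p ω) μ :=
    ((h.integrable_hrruZ p).const_mul _).indicator (h.hrruG_le p _ hE)
  have hZm : StronglyMeasurable[hrruG N X R p]
      ((N (p + 1) ⁻¹' {m}).indicator fun ω => m * hrruZ a b N X R p ω) :=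
    (((measurable_const.mul (measurable_hrruZ p)).mono le_sup_left le_rfl).indicator
      hE).stronglyMeasurable
  refine (condExp_sub (h.integrable_indicator_X p m) hZE _).trans ?_
  rw [condExp_of_stronglyMeasurable (h.hrruG_le p) hZm hZE]
  filter_upwards [h.condExp_indicator_X_ae_eq p m] with ω hω
  exact sub_eq_zero.2 hω

theorem condExp_hrruIncr_ae_eq_zero (h : IsHRRU μ a b N X R) (p r : ℕ) :
    μ[hrruIncr a b N X R p r | hrruG N X R p] =ᵐ[μ] 0 := by
  refine condExp_ae_eq_zero_of_forall_indicator_preimage (measurable_N_succ_hrruG p)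
    (h.integrable_hrruIncr p r) fun m => ?_
  set E := N (p + 1) ⁻¹' {m}
  set c : Ω → ℝ := fun ω => r / (hrruS a b N R p ω + m * r)
  set Y := E.indicator (fun ω => (X (p + 1) ω : ℝ)) -
    E.indicator (fun ω => m * hrruZ a b N X R p ω)
  -- on `E = {N (p + 1) = m}` the denominator of the increment is `𝒢 p`-measurable
  have hcY : E.indicator (hrruIncr a b N X R p r) = c * Y := by
    ext ω
    by_cases hω : ω ∈ E
    · simp only [Pi.mul_apply, Pi.sub_apply, Set.indicator_of_mem hω, c, Y, hrruIncr,
        show N (p + 1) ω = m from hω]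
      ring
    · simp [Y, hω]
  have hS : Measurable[hrruG N X R p] fun ω => (hrruS a b N R p ω : ℝ) :=
    measurable_from_top.comp ((measurable_hrruS p).mono le_sup_left le_rfl)
  have hc : StronglyMeasurable[hrruG N X R p] c :=
    (measurable_const.fun_div (hS.fun_add measurable_const)).stronglyMeasurable
  have hYi : Integrable Y μ := (h.integrable_indicator_X p m).sub
    (((h.integrable_hrruZ p).const_mul _).indicator (h.measN (p + 1) (measurableSet_singleton m)))
  rw [hcY]
  refine (condExp_mul_of_stronglyMeasurable_left hc (hcY ▸ (h.integrable_hrruIncr p r).indicator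
    (h.measN (p + 1) (measurableSet_singleton m))) hYi).trans ?_
  filter_upwards [h.condExp_indicator_X_sub_ae_eq_zero p m] with ω hω
  rw [Pi.mul_apply, hω, Pi.zero_apply, mul_zero]

theorem condExp_hrruZ_succ (h : IsHRRU μ a b N X R) (p : ℕ) :
    μ[hrruZ a b N X R (p + 1) | hrruHfilt N X R p] =ᵐ[μ] hrruZ a b N X R p := by
  have hD : (fun ω => hrruIncr a b N X R p (R (p + 1) ω) ω) =
      hrruZ a b N X R (p + 1) - hrruZ a b N X R p :=
    funext fun ω => (hrruZ_succ_sub_eq_hrruIncr h.add_pos p ω).symm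
  have hDi : Integrable (fun ω => hrruIncr a b N X R p (R (p + 1) ω) ω) μ :=
    hD ▸ (h.integrable_hrruZ (p + 1)).sub (h.integrable_hrruZ p)
  have hcentered : μ[fun ω => hrruIncr a b N X R p (R (p + 1) ω) ω | hrruHfilt N X R p] =ᵐ[μ] 0 :=
    condExp_comp_ae_eq_zero_of_indep le_sup_left (sup_le (h.hrruG_le p) (h.measX (p + 1)).comap_le)
      (h.measR (p + 1)) (h.indepR (p + 1) p.succ_pos)
      (fun r => (measurable_hrruIncr p r).stronglyMeasurable) (h.integrable_hrruIncr p)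
      (h.condExp_hrruIncr_ae_eq_zero p) hDi
  rw [show hrruZ a b N X R (p + 1) = hrruZ a b N X R p + _ from (add_sub_cancel _ _).symm, ← hD]
  refine (condExp_add (h.integrable_hrruZ p) hDi _).trans ?_
  rw [condExp_of_stronglyMeasurable (h.hrruHfilt_le p)
    ((measurable_hrruZ p).mono (hrruF_le_hrruHfilt p) le_rfl).stronglyMeasurable
    (h.integrable_hrruZ p)]
  filter_upwards [hcentered] with ω hω
  simp [hω]

end IsHRRU

/-- in the HRRU model the proportion sequence satisfies
`Z n - Z (n-1) = R n * (X n - N n * Z (n-1)) / S n` and `(Z n)` is a martingale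
with respect to the filtration `(ℋ n)`, `ℋ (n-1) = ℱ (n-1) ∨ σ(N n) ∨ σ(R n)`. -/
theorem stmt3
    {Ω : Type*} [m0 : MeasurableSpace Ω] (μ : Measure Ω) [IsProbabilityMeasure μ]
    (a b : ℕ) (N X R : ℕ → Ω → ℕ) (h : IsHRRU μ a b N X R) :
    (∀ n, 1 ≤ n → ∀ ω,
      hrruZ a b N X R n ω - hrruZ a b N X R (n - 1) ω =
        (R n ω : ℝ) * ((X n ω : ℝ) - (N n ω : ℝ) * hrruZ a b N X R (n - 1) ω) /
          (hrruS a b N R n ω : ℝ)) ∧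
    (∀ n, StronglyMeasurable[hrruHfilt N X R n] (hrruZ a b N X R n)) ∧
    (∀ n, 1 ≤ n →
      (μ[hrruZ a b N X R n|hrruHfilt N X R (n - 1)]) =ᵐ[μ] hrruZ a b N X R (n - 1)) := by
  refine ⟨fun n hn ω => ?_, fun n => ?_, fun n hn => ?_⟩
  · obtain ⟨p, rfl⟩ := Nat.exists_eq_add_of_le' hn
    exact hrruZ_succ_sub h.add_pos p ω
  · exact ((measurable_hrruZ n).mono (hrruF_le_hrruHfilt n) le_rfl).stronglyMeasurable
  · obtain ⟨p, rfl⟩ := Nat.exists_eq_add_of_le' hn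
    exact h.condExp_hrruZ_succ p
end
end
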